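/- Let α be an arrow such that ᾱ is a loop (s(ᾱ) = t(ᾱ)), f(ᾱ) = α, and ᾱ is virtual (so n_ᾱ = 1 and m_ᾱ = 2; by the Assumption m_α n_α ≥ 4). Let A'_α = x_{g(α)} x_{g²(α)} ⋯ x_{g^{m_α n_α − 2}(α)} (so that x_α A'_α = A_α), and set φ = x_{f(α)} x_α − c_ᾱ c_α A'_α in Λ. Then φ x_{f(α)} = 0. -/

import Mathlib

/-- A triangulation quiver: a connected 2-regular quiver `(Q₀ = V, Q₁ = A, s, t)`
with at least two vertices, together with a permutation `f` of the arrows with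
`t α = s (f α)` and `f³ = id`.  Two-regularity is encoded via the involution
`bar` on arrows (`bar α` is the unique arrow `≠ α` with the same source);
the in-degree condition follows from `f` being a bijection. -/
structure TQ (V A : Type) [Fintype V] [DecidableEq V] [Fintype A] [DecidableEq A] where
  s : A → V
  t : A → V
  bar : A → A
  bar_ne : ∀ a, bar a ≠ a
  bar_invol : ∀ a, bar (bar a) = a
  s_bar : ∀ a, s (bar a) = s a
  bar_complete : ∀ a b, s b = s a → b = a ∨ b = bar a
  s_surj : ∀ i, ∃ a, s a = i
  f : Equiv.Perm A
  t_eq : ∀ a, t a = s (f a)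
  f_cube : ∀ a, f (f (f a)) = a
  connected : ∀ i j : V, Relation.ReflTransGen
      (fun p q => ∃ e, (s e = p ∧ t e = q) ∨ (s e = q ∧ t e = p)) i j
  two_vertices : 2 ≤ Fintype.card V

variable {V A : Type} [Fintype V] [DecidableEq V] [Fintype A] [DecidableEq A]

/-- The permutation `g` of arrows, `g α = \overline{f α}`. -/
def TQ.g (Q : TQ V A) (a : A) : A := Q.bar (Q.f a)

/-- `n α` is the length of the `g`-cycle of `α`. -/
noncomputable def TQ.n (Q : TQ V A) (a : A) : ℕ := Function.minimalPeriod Q.g a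

/-- A loop is an arrow with equal source and target. -/
def TQ.IsLoop (Q : TQ V A) (a : A) : Prop := Q.s a = Q.t a

/-- A weight function: positive integers `m α`, constant on `g`-cycles. -/
structure Weights (Q : TQ V A) where
  m : A → ℕ
  m_pos : ∀ a, 0 < m a
  m_g : ∀ a, m (Q.g a) = m a

/-- An arrow `α` is virtual if `m α * n α = 2`. -/
def Weights.Virtual {Q : TQ V A} (W : Weights Q) (a : A) : Prop := W.m a * Q.n a = 2

/-- The Assumption: (1) `m α n α ≥ 2` for all `α`; (2) `m α n α ≥ 3` whenever `ᾱ` is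
virtual and not a loop; (3) `m α n α ≥ 4` whenever `ᾱ` is virtual and a loop. -/
def Weights.Assumption {Q : TQ V A} (W : Weights Q) : Prop :=
  (∀ a, 2 ≤ W.m a * Q.n a) ∧
  (∀ a, W.Virtual (Q.bar a) → ¬ Q.IsLoop (Q.bar a) → 3 ≤ W.m a * Q.n a) ∧
  (∀ a, W.Virtual (Q.bar a) → Q.IsLoop (Q.bar a) → 4 ≤ W.m a * Q.n a)

/-- The data of an associative unital `K`-algebra `Λ` generated by pairwise orthogonal
idempotents `e i` summing to `1`, elements `x α ∈ e (s α) * Λ * e (t α)`, and nonzero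
parameters `c α ∈ K` constant on `g`-cycles. -/
structure AlgData (Q : TQ V A) (W : Weights Q) (K : Type) [Field K]
    (Λ : Type) [Ring Λ] [Algebra K Λ] where
  e : V → Λ
  x : A → Λ
  c : A → K
  c_ne : ∀ a, c a ≠ 0
  c_g : ∀ a, c (Q.g a) = c a
  e_orth : ∀ i j, e i * e j = if i = j then e i else 0
  e_sum : ∑ i, e i = 1
  x_sandwich : ∀ a, e (Q.s a) * x a * e (Q.t a) = x a

variable {Q : TQ V A} {W : Weights Q} {K : Type} [Field K] {Λ : Type} [Ring Λ] [Algebra K Λ]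

/-- `B α = x_α x_{g α} ⋯ x_{g^{m_α n_α − 1} α}`, the full product along the `g`-cycle. -/
noncomputable def AlgData.B (D : AlgData Q W K Λ) (a : A) : Λ :=
  ((List.range (W.m a * Q.n a)).map (fun k => D.x (Q.g^[k] a))).prod

/-- `A α = x_α x_{g α} ⋯ x_{g^{m_α n_α − 2} α}`, of length `m_α n_α − 1`. -/
noncomputable def AlgData.Apath (D : AlgData Q W K Λ) (a : A) : Λ :=
  ((List.range (W.m a * Q.n a - 1)).map (fun k => D.x (Q.g^[k] a))).prod

/-- The defining relations (R1), (R2), (R3) of a weighted surface algebra. -/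
def AlgData.Rels (D : AlgData Q W K Λ) : Prop :=
  (∀ a, D.x a * D.x (Q.f a) = D.c (Q.bar a) • D.Apath (Q.bar a)) ∧
  (∀ a, ¬ W.Virtual (Q.f (Q.f a)) →
      ¬ (W.Virtual (Q.f (Q.bar a)) ∧ W.m (Q.bar a) = 1 ∧ Q.n (Q.bar a) = 3) →
      D.x a * D.x (Q.f a) * D.x (Q.g (Q.f a)) = 0) ∧
  (∀ a, ¬ W.Virtual (Q.f a) →
      ¬ (W.Virtual (Q.f (Q.f a)) ∧ W.m (Q.f a) = 1 ∧ Q.n (Q.f a) = 3) →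
      D.x a * D.x (Q.g a) * D.x (Q.f (Q.g a)) = 0)

/-- `J`: the two-sided ideal of `Λ` generated by the `x α`, as a `K`-submodule. -/
def AlgData.J (D : AlgData Q W K Λ) : Submodule K Λ :=
  Submodule.span K {z | ∃ (a : A) (u v : Λ), z = u * D.x a * v}

/-!
Since `ᾱ` is virtual, (R1) at `α` reads `x_α x_{fα} = c_ᾱ x_ᾱ`, and since `f(fα) = ᾱ` and
`\overline{fα} = gα`, (R1) at `fα` reads `x_{fα} x_ᾱ = c_α A_{gα}`. The path `A_{gα}` runs along
the `g`-cycle of `α` from `gα` up to `g^{-1}α = fα`, so `A_{gα} = A'_α x_{fα}` and both terms of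
`φ x_{fα}` equal `c_ᾱ c_α A'_α x_{fα}`.
-/

namespace TQ

variable (Q)

theorem f_f_eq_of_f_eq {a b : A} (h : Q.f a = b) : Q.f (Q.f b) = a := by
  rw [← h, Q.f_cube]

theorem g_injective : Function.Injective Q.g := fun a b h =>
  Q.f.injective (by simpa only [TQ.g, Q.bar_invol] using congrArg Q.bar h)

theorem n_g (a : A) : Q.n (Q.g a) = Q.n a :=
  Function.minimalPeriod_apply (Q.g_injective.mem_periodicPts a)

theorem isPeriodicPt_g_mul_n (m : ℕ) (a : A) : Function.IsPeriodicPt Q.g (m * Q.n a) a := by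
  rw [mul_comm]
  exact (Function.isPeriodicPt_minimalPeriod Q.g a).mul_const m

theorem g_iterate_pred_eq {a b : A} (hab : Q.g b = a) {k : ℕ} (hk : 1 ≤ k)
    (hper : Function.IsPeriodicPt Q.g k a) : Q.g^[k - 1] a = b :=
  Q.g_injective <| by
    rw [hab, ← Function.iterate_succ_apply' Q.g, Nat.succ_eq_add_one, Nat.sub_add_cancel hk,
      hper.eq]

end TQ

theorem Weights.mn_g (W : Weights Q) (a : A) :
    W.m (Q.g a) * Q.n (Q.g a) = W.m a * Q.n a := by
  rw [W.m_g, Q.n_g]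

namespace AlgData

variable (D : AlgData Q W K Λ)

theorem Apath_of_virtual {a : A} (h : W.Virtual a) : D.Apath a = D.x a := by
  rw [AlgData.Apath, show W.m a * Q.n a = 2 from h]
  simp

theorem Apath_g {a : A} (h : 2 ≤ W.m a * Q.n a) :
    D.Apath (Q.g a) =
      ((List.range (W.m a * Q.n a - 2)).map (fun k => D.x (Q.g^[k + 1] a))).prod *
        D.x (Q.g^[W.m a * Q.n a - 1] a) := by
  have hlen : W.m a * Q.n a - 1 = W.m a * Q.n a - 2 + 1 := by omega
  simp only [AlgData.Apath, W.mn_g, hlen, List.range_succ, List.map_append, List.prod_append,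
    List.map_singleton, List.prod_singleton, ← Function.iterate_succ_apply]

end AlgData

theorem stmt18_general (Q : TQ V A) (W : Weights Q) (hA : W.Assumption)
    {K : Type} [Field K] {Λ : Type} [Ring Λ] [Algebra K Λ]
    (D : AlgData Q W K Λ) (hR : D.Rels) (α : A)
    (hf : Q.f (Q.bar α) = α)
    (hv : W.Virtual (Q.bar α)) :
    (D.x (Q.f α) * D.x α -
        (D.c (Q.bar α) * D.c α) •
          ((List.range (W.m α * Q.n α - 2)).map (fun k => D.x (Q.g^[k + 1] α))).prod) *
      D.x (Q.f α) = 0 := by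
  have hff : Q.f (Q.f α) = Q.bar α := Q.f_f_eq_of_f_eq hf
  have hgf : Q.g (Q.f α) = α := by rw [TQ.g, hff, Q.bar_invol]
  have hmn : 2 ≤ W.m α * Q.n α := hA.1 α
  have hlast : Q.g^[W.m α * Q.n α - 1] α = Q.f α :=
    Q.g_iterate_pred_eq hgf (by omega) (Q.isPeriodicPt_g_mul_n _ α)
  have hR1_α : D.x α * D.x (Q.f α) = D.c (Q.bar α) • D.x (Q.bar α) := by
    rw [hR.1 α, D.Apath_of_virtual hv]
  have hR1_fα : D.x (Q.f α) * D.x (Q.bar α) = D.c α • D.Apath (Q.g α) := by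
    rw [← hff, hR.1 (Q.f α), ← D.c_g α]
    rfl
  rw [sub_mul, smul_mul_assoc, mul_assoc, hR1_α, mul_smul_comm, hR1_fα, smul_smul,
    D.Apath_g hmn, hlast, sub_self]

/-- if `ᾱ` is a virtual loop with `f ᾱ = α`, and
`φ = x_{f α} x_α − c_ᾱ c_α A'_α` where `x_α A'_α = A_α`, then `φ x_{f α} = 0`. -/
theorem stmt18 (Q : TQ V A) (W : Weights Q) (h3 : 3 ≤ Fintype.card V) (hA : W.Assumption)
    {K : Type} [Field K] {Λ : Type} [Ring Λ] [Algebra K Λ]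
    (D : AlgData Q W K Λ) (hR : D.Rels) (α : A)
    (hloop : Q.IsLoop (Q.bar α)) (hf : Q.f (Q.bar α) = α)
    (hv : W.Virtual (Q.bar α)) :
    (D.x (Q.f α) * D.x α -
        (D.c (Q.bar α) * D.c α) •
          ((List.range (W.m α * Q.n α - 2)).map (fun k => D.x (Q.g^[k + 1] α))).prod) *
      D.x (Q.f α) = 0 :=
  stmt18_general Q W hA D hR α hf hv
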